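/- For all 1 ≤ i, j, i', j' ≤ n, all 1 ≤ a, b ≤ d', and all integers k, l ≥ 0, the commutator in End_ℂ(Λ) satisfies ⁅G_a(i,j;k), G_b(i',j';l)⁆ = δ_{a,b}·( δ_{j,i'}·G_a(i,j';k+l) − δ_{i,j'}·G_a(i',j;k+l) ). (This is the fermionic even–even part of Proposition 4.2 of the paper: the operators E^{p+q+i}_{p+q+j} ⊗ t̄_{w_a}^k ↦ Σ_α x^{α+k}_i ∂_{x^α_j}, with x odd variables, realize the Takiff algebra relations of ⊕_{a=1}^{d'} gl_n[t_{w_a}]/t_{w_a}^{ξ_a} gl_n[t_{w_a}] on the fermionic Fock space; it underlies the fermionic duality of Corollary 4.6 (p=q=m=0).) -/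

import Mathlib

/-- The fermionic creation operator `a†_{α,i}`: left multiplication by the generator
`ι(e_{α,i})` of the exterior algebra on `(Fin d × Fin n) → ℂ`, where `e_{α,i}` is the
standard basis vector. -/
noncomputable def crea (d n : ℕ) (α : Fin d) (i : Fin n) :
    Module.End ℂ (ExteriorAlgebra ℂ ((Fin d × Fin n) → ℂ)) :=
  LinearMap.mulLeft ℂ (ExteriorAlgebra.ι ℂ (Pi.single (α, i) 1))

/-- The fermionic annihilation operator `a_{α,i}`: left contraction (interior product)
along the coordinate functional `ε_{α,i}`, i.e. `CliffordAlgebra.contractLeft` for the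
Clifford algebra of the zero quadratic form. -/
noncomputable def anni (d n : ℕ) (α : Fin d) (i : Fin n) :
    Module.End ℂ (ExteriorAlgebra ℂ ((Fin d × Fin n) → ℂ)) :=
  CliffordAlgebra.contractLeft (Q := (0 : QuadraticForm ℂ ((Fin d × Fin n) → ℂ)))
    (LinearMap.proj (α, i))

/-- The operator `G_a(i,j;k) = Σ_{α=D+1}^{D+ξ-k} a†_{α+k,i} ∘ a_{α,j}` on the fermionic
Fock space, where `D = d_a`, `ξ = ξ_a` (superscripts written 0-based, so `α` runs over
`D, D+1, …, D+ξ-k-1`). -/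
noncomputable def Gferm (d n : ℕ) (D ξ : ℕ) (i j : Fin n) (k : ℕ) :
    Module.End ℂ (ExteriorAlgebra ℂ ((Fin d × Fin n) → ℂ)) :=
  ∑ α ∈ Finset.range (ξ - k),
      if h : D + α + k < d then
        crea d n ⟨D + α + k, h⟩ i * anni d n ⟨D + α, by omega⟩ j
      else 0

/-!
Each summand of `G_a(i,j;k)` is a quadratic monomial `a†_p a_q` with `q ≤ p`. For two such
monomials the canonical anticommutation relations give
`⁅a†_p a_q, a†_r a_s⁆ = δ_{qr} a†_p a_s - δ_{sp} a†_r a_q`. In the double sum over the two blocks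
the delta `δ_{qr}` can only fire when both indices lie in the same block (distinct blocks occupy
disjoint index ranges `[d_a, d_a + ξ_a)`), and there it pairs `α = β + l`, which reassembles the
summands of `G_a(i,j';k+l)`; symmetrically for `δ_{sp}`.
-/

open Finset

lemma Finset.sum_filter_lt_add_le {ι : Type*} [Fintype ι] [LinearOrder ι] (f : ι → ℕ)
    {c e : ι} (h : c < e) :
    ∑ b ∈ univ.filter (· < c), f b + f c ≤ ∑ b ∈ univ.filter (· < e), f b := by
  rw [add_comm, ← sum_insert (by simp)]
  refine sum_le_sum_of_subset fun x hx => ?_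
  simp only [mem_insert, mem_filter, mem_univ, true_and] at hx ⊢
  rcases hx with rfl | hx
  exacts [h, hx.trans h]

lemma Finset.sum_range_sum_range_ite_eq_add {M : Type*} [AddCommMonoid M] (ξ k l : ℕ)
    (f : ℕ → ℕ → M) :
    ∑ α ∈ range (ξ - k), ∑ β ∈ range (ξ - l), (if α = β + l then f α β else 0)
      = ∑ β ∈ range (ξ - (k + l)), f (β + l) β := by
  rw [sum_comm]
  simp only [sum_ite_eq', mem_range]
  rw [← sum_filter]
  congr 1
  ext β
  simp only [mem_filter, mem_range]
  omega

theorem Ring.sum_lie_sum {R ι κ : Type*} [Ring R] (s : Finset ι) (t : Finset κ) (f : ι → R)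
    (g : κ → R) : ⁅∑ x ∈ s, f x, ∑ y ∈ t, g y⁆ = ∑ x ∈ s, ∑ y ∈ t, ⁅f x, g y⁆ := by
  simp only [Ring.lie_def, sum_mul_sum, sum_sub_distrib]
  rw [sum_comm (s := t)]

lemma lie_mul_mul_of_anticommute {R : Type*} [Ring R] {c a c' a' e e' : R}
    (h₁ : a * c' + c' * a = e) (h₂ : a' * c + c * a' = e')
    (hc : c * c' + c' * c = 0) (ha : a * a' + a' * a = 0)
    (he : Commute e c) (he' : Commute e' c') :
    ⁅c * a, c' * a'⁆ = e * (c * a') - e' * (c' * a) := by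
  have h₁' : a * c' = e - c' * a := eq_sub_of_add_eq h₁
  have h₂' : a' * c = e' - c * a' := eq_sub_of_add_eq h₂
  have hc' : c' * c = -(c * c') := eq_neg_of_add_eq_zero_right hc
  have ha' : a' * a = -(a * a') := eq_neg_of_add_eq_zero_right ha
  calc ⁅c * a, c' * a'⁆ = c * (a * c') * a' - c' * (a' * c) * a := by
        rw [Ring.lie_def]; noncomm_ring
    _ = c * e * a' - c' * e' * a - (c * c' * (a * a') - c' * c * (a' * a)) := by
        rw [h₁', h₂']; noncomm_ring
    _ = e * (c * a') - e' * (c' * a) := by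
        rw [← he.eq, ← he'.eq, hc', ha']; noncomm_ring

section CAR

variable {d n : ℕ}

lemma anni_mul_crea_add_crea_mul_anni (u v : Fin d) (i j : Fin n) :
    anni d n u i * crea d n v j + crea d n v j * anni d n u i
      = if u = v ∧ i = j then 1 else 0 := by
  refine LinearMap.ext fun x => ?_
  have hproj : LinearMap.proj (R := ℂ) (φ := fun _ : Fin d × Fin n => ℂ) (u, i)
      (Pi.single (v, j) 1) = if u = v ∧ i = j then 1 else 0 := by
    simp [Pi.single_apply, Prod.mk.injEq]
  simp only [LinearMap.add_apply, Module.End.mul_apply, crea, anni, LinearMap.mulLeft_apply,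
    CliffordAlgebra.contractLeft_ι_mul, sub_add_cancel, hproj]
  split_ifs <;> simp

lemma crea_mul_crea_add_crea_mul_crea (u v : Fin d) (i j : Fin n) :
    crea d n u i * crea d n v j + crea d n v j * crea d n u i = 0 := by
  refine LinearMap.ext fun x => ?_
  simp only [LinearMap.add_apply, Module.End.mul_apply, crea, LinearMap.mulLeft_apply,
    LinearMap.zero_apply, ← mul_assoc, ← add_mul, ExteriorAlgebra.ι_add_mul_swap, zero_mul]

lemma anni_mul_anni_add_anni_mul_anni (u v : Fin d) (i j : Fin n) :
    anni d n u i * anni d n v j + anni d n v j * anni d n u i = 0 := by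
  refine LinearMap.ext fun x => ?_
  simp only [LinearMap.add_apply, Module.End.mul_apply, anni, LinearMap.zero_apply]
  rw [CliffordAlgebra.contractLeft_comm, neg_add_cancel]

noncomputable def creaNat (d n : ℕ) (p : ℕ) (i : Fin n) :
    Module.End ℂ (ExteriorAlgebra ℂ ((Fin d × Fin n) → ℂ)) :=
  if h : p < d then crea d n ⟨p, h⟩ i else 0

noncomputable def anniNat (d n : ℕ) (p : ℕ) (j : Fin n) :
    Module.End ℂ (ExteriorAlgebra ℂ ((Fin d × Fin n) → ℂ)) :=
  if h : p < d then anni d n ⟨p, h⟩ j else 0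

lemma creaNat_of_le {p : ℕ} (i : Fin n) (h : d ≤ p) : creaNat d n p i = 0 :=
  dif_neg h.not_gt

lemma anniNat_mul_creaNat_add_creaNat_mul_anniNat (p q : ℕ) (i j : Fin n) :
    anniNat d n p i * creaNat d n q j + creaNat d n q j * anniNat d n p i
      = if p = q ∧ i = j ∧ p < d then 1 else 0 := by
  unfold anniNat creaNat
  split_ifs <;> simp_all [anni_mul_crea_add_crea_mul_anni, Fin.ext_iff] <;> omega

lemma creaNat_mul_creaNat_add_creaNat_mul_creaNat (p q : ℕ) (i j : Fin n) :
    creaNat d n p i * creaNat d n q j + creaNat d n q j * creaNat d n p i = 0 := by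
  unfold creaNat
  split_ifs <;> simp [crea_mul_crea_add_crea_mul_crea]

lemma anniNat_mul_anniNat_add_anniNat_mul_anniNat (p q : ℕ) (i j : Fin n) :
    anniNat d n p i * anniNat d n q j + anniNat d n q j * anniNat d n p i = 0 := by
  unfold anniNat
  split_ifs <;> simp [anni_mul_anni_add_anni_mul_anni]

/-- The range condition `q < d` of the anticommutator `{a_q, a†_q}` disappears because `q ≥ d`
already forces `a†_p = 0`. -/
lemma lie_creaNat_mul_anniNat {p q r s : ℕ} (hqp : q ≤ p) (hsr : s ≤ r) (i j i' j' : Fin n) :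
    ⁅creaNat d n p i * anniNat d n q j, creaNat d n r i' * anniNat d n s j'⁆
      = (if j = i' ∧ q = r then creaNat d n p i * anniNat d n s j' else 0)
        - (if j' = i ∧ s = p then creaNat d n r i' * anniNat d n q j else 0) := by
  rw [lie_mul_mul_of_anticommute (anniNat_mul_creaNat_add_creaNat_mul_anniNat q r j i')
    (anniNat_mul_creaNat_add_creaNat_mul_anniNat s p j' i)
    (creaNat_mul_creaNat_add_creaNat_mul_creaNat p r i i')
    (anniNat_mul_anniNat_add_anniNat_mul_anniNat q s j j')
    (by split_ifs <;> simp) (by split_ifs <;> simp)]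
  congr 1
  · by_cases hq : q < d
    · split_ifs <;> simp_all
    · simp [creaNat_of_le i (show d ≤ p by omega)]
  · by_cases hs : s < d
    · split_ifs <;> simp_all
    · simp [creaNat_of_le i' (show d ≤ r by omega)]

lemma Gferm_eq_sum_creaNat_mul_anniNat (D ξ : ℕ) (i j : Fin n) (k : ℕ) :
    Gferm d n D ξ i j k
      = ∑ α ∈ range (ξ - k), creaNat d n (D + α + k) i * anniNat d n (D + α) j := by
  refine sum_congr rfl fun α _ => ?_
  unfold creaNat anniNat
  split_ifs <;> first | rfl | omega

lemma sum_sum_ite_eq_Gferm (D ξ : ℕ) (i j i' j' : Fin n) (k l : ℕ) :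
    ∑ α ∈ range (ξ - k), ∑ β ∈ range (ξ - l),
      (if j = i' ∧ D + α = D + β + l then creaNat d n (D + α + k) i * anniNat d n (D + β) j'
        else 0)
      = if j = i' then Gferm d n D ξ i j' (k + l) else 0 := by
  split_ifs with h
  · simp only [h, true_and, add_assoc, add_right_inj]
    rw [sum_range_sum_range_ite_eq_add, Gferm_eq_sum_creaNat_mul_anniNat]
    simp only [add_assoc, add_comm l k]
  · simp [h]

end CAR

theorem stmt14_general (n : ℕ) (d' : ℕ)
    (ξ : Fin d' → ℕ) (d : ℕ)
    (D : Fin d' → ℕ)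
    (hD : ∀ a, D a = ∑ b ∈ Finset.univ.filter (fun b => b < a), ξ b)
    (a b : Fin d') (i j i' j' : Fin n) (k l : ℕ) :
    Gferm d n (D a) (ξ a) i j k * Gferm d n (D b) (ξ b) i' j' l
      - Gferm d n (D b) (ξ b) i' j' l * Gferm d n (D a) (ξ a) i j k
    = if a = b then
        (if j = i' then Gferm d n (D a) (ξ a) i j' (k + l) else 0)
          - (if i = j' then Gferm d n (D a) (ξ a) i' j (k + l) else 0)
      else 0 := by
  have hblocks : ∀ c e : Fin d', c ≠ e → ∀ x < ξ c, ∀ y < ξ e, D c + x ≠ D e + y := by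
    intro c e hce x hx y hy
    rcases hce.lt_or_gt with h | h <;>
      have := hD c ▸ hD e ▸ sum_filter_lt_add_le ξ h <;> omega
  rw [← Ring.lie_def, Gferm_eq_sum_creaNat_mul_anniNat, Gferm_eq_sum_creaNat_mul_anniNat,
    Ring.sum_lie_sum]
  rw [sum_congr rfl fun α _ => sum_congr rfl fun β _ =>
    lie_creaNat_mul_anniNat (by omega) (by omega) i j i' j']
  simp only [sum_sub_distrib]
  by_cases hab : a = b
  · subst hab
    rw [if_pos rfl, sum_sum_ite_eq_Gferm, sum_comm, sum_sum_ite_eq_Gferm, add_comm l]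
    simp_rw [eq_comm (a := j')]
  · rw [if_neg hab, sum_eq_zero ?_, sum_eq_zero ?_, sub_zero]
    all_goals
      intro α hα
      refine sum_eq_zero fun β hβ => if_neg ?_
      rintro ⟨-, h⟩
      rw [mem_range] at hα hβ
    · exact hblocks b a (Ne.symm hab) β (by omega) (α + k) (by omega) (by omega)
    · exact hblocks a b hab α (by omega) (β + l) (by omega) (by omega)

/-- On the fermionic Fock space, the operators `G_a(i,j;k)` realize
the Takiff algebra relations of `⊕_{a=1}^{d'} gl_n[t_{w_a}]/t_{w_a}^{ξ_a} gl_n[t_{w_a}]`: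
`⁅G_a(i,j;k), G_b(i',j';l)⁆ = δ_{ab} (δ_{j i'} G_a(i,j';k+l) - δ_{i j'} G_a(i',j;k+l))`. -/
theorem stmt14 (n : ℕ) (hn : 1 ≤ n) (d' : ℕ) (hd' : 1 ≤ d')
    (ξ : Fin d' → ℕ) (hξ : ∀ a, 0 < ξ a) (d : ℕ) (hd : d = ∑ a, ξ a)
    (D : Fin d' → ℕ)
    (hD : ∀ a, D a = ∑ b ∈ Finset.univ.filter (fun b => b < a), ξ b)
    (a b : Fin d') (i j i' j' : Fin n) (k l : ℕ) :
    Gferm d n (D a) (ξ a) i j k * Gferm d n (D b) (ξ b) i' j' l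
      - Gferm d n (D b) (ξ b) i' j' l * Gferm d n (D a) (ξ a) i j k
    = if a = b then
        (if j = i' then Gferm d n (D a) (ξ a) i j' (k + l) else 0)
          - (if i = j' then Gferm d n (D a) (ξ a) i' j (k + l) else 0)
      else 0 :=
  stmt14_general n d' ξ d D hD a b i j i' j' k l
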